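/- Let L be a join-semilattice. The map Ind(L) → 2^{X_L} sending an ind-object S to Supp(S) := {P ∈ X_L | S ⊄ P} is injective; moreover the map sending a subset Z ⊆ X_L to {l ∈ L | Supp(l) ⊆ Z} is a left inverse, i.e., for every S ∈ Ind(L) one has S = {l ∈ L | Supp(l) ⊆ Supp(S)}. -/

import Mathlib

/-!
For `l ∉ S`, Zorn's lemma gives an ind-object `P ⊇ S` maximal among those avoiding `l`.
Every ind-object strictly above `P` then contains `l`, so `l` lies in the intersection of
those ind-objects but not in `P`. Thus `P ∈ X_L` lies in `Supp(l)` but not in `Supp(S)`.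
Hence `S` is recovered from `Supp(S)` as `{l | Supp(l) ⊆ Supp(S)}`, and injectivity follows.
-/

/-- An ind-object of a join-semilattice `L`: a nonempty, downward closed subset of `L`
closed under joins of two elements. -/
def IsIndObject {L : Type*} [SemilatticeSup L] (S : Set L) : Prop :=
  S.Nonempty ∧ (∀ ⦃l s : L⦄, l ≤ s → s ∈ S → l ∈ S) ∧ ∀ ⦃a b : L⦄, a ∈ S → b ∈ S → a ⊔ b ∈ S

/-- `Ind(L)`, the set of ind-objects of `L`, partially ordered by inclusion. -/
abbrev IndObj (L : Type*) [SemilatticeSup L] := {S : Set L // IsIndObject S}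

/-- The intersection of all ind-objects strictly containing `P`. -/
def indInterAbove {L : Type*} [SemilatticeSup L] (P : IndObj L) : Set L :=
  ⋂ (Q : IndObj L) (_ : P.1 ⊂ Q.1), Q.1

/-- `X_L`: the set of `P ∈ Ind(L)` such that the intersection of all ind-objects
strictly containing `P` strictly contains `P`. -/
abbrev XL (L : Type*) [SemilatticeSup L] := {P : IndObj L // P.1 ⊂ indInterAbove P}

/-- `Supp(S) = {P ∈ X_L | S ⊄ P}` for an ind-object `S`. -/
def indSupp {L : Type*} [SemilatticeSup L] (S : IndObj L) : Set (XL L) :=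
  {P : XL L | ¬ S.1 ⊆ P.1.1}

/-- `Supp(l) = {P ∈ X_L | l ∉ P}` for `l ∈ L`. -/
def ptSupp {L : Type*} [SemilatticeSup L] (l : L) : Set (XL L) :=
  {P : XL L | l ∉ P.1.1}

section

variable {L : Type*} [SemilatticeSup L]

lemma IsIndObject.sUnion_of_isChain {c : Set (Set L)} (hc : ∀ T ∈ c, IsIndObject T)
    (hchain : IsChain (· ⊆ ·) c) (hne : c.Nonempty) : IsIndObject (⋃₀ c) := by
  obtain ⟨T, hT⟩ := hne
  refine ⟨?_, ?_, ?_⟩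
  · obtain ⟨x, hx⟩ := (hc T hT).1
    exact ⟨x, T, hT, hx⟩
  · rintro a b hab ⟨U, hU, hbU⟩
    exact ⟨U, hU, (hc U hU).2.1 hab hbU⟩
  · rintro a b ⟨U, hU, haU⟩ ⟨V, hV, hbV⟩
    rcases hchain.total hU hV with h | h
    · exact ⟨V, hV, (hc V hV).2.2 (h haU) hbV⟩
    · exact ⟨U, hU, (hc U hU).2.2 haU (h hbV)⟩

lemma mem_indInterAbove_iff {P : IndObj L} {l : L} :
    l ∈ indInterAbove P ↔ ∀ Q : IndObj L, P.1 ⊂ Q.1 → l ∈ Q.1 := by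
  simp only [indInterAbove, Set.mem_iInter]

lemma subset_indInterAbove (P : IndObj L) : P.1 ⊆ indInterAbove P :=
  fun _ hx => mem_indInterAbove_iff.2 fun _ hQ => hQ.le hx

lemma exists_indObj_maximal_not_mem (S : IndObj L) {l : L} (hl : l ∉ S.1) :
    ∃ P : IndObj L, S.1 ⊆ P.1 ∧ l ∉ P.1 ∧ ∀ Q : IndObj L, P.1 ⊂ Q.1 → l ∈ Q.1 := by
  let 𝒜 : Set (Set L) := {T | IsIndObject T ∧ S.1 ⊆ T ∧ l ∉ T}
  have hchain : ∀ c ⊆ 𝒜, IsChain (· ⊆ ·) c → c.Nonempty → ∃ ub ∈ 𝒜, ∀ s ∈ c, s ⊆ ub := by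
    intro c hc hchain ⟨T, hT⟩
    have hind : IsIndObject (⋃₀ c) :=
      IsIndObject.sUnion_of_isChain (fun U hU => (hc hU).1) hchain ⟨T, hT⟩
    refine ⟨⋃₀ c, ⟨hind, ?_, ?_⟩, fun _ => Set.subset_sUnion_of_mem⟩
    · exact (hc hT).2.1.trans (Set.subset_sUnion_of_mem hT)
    · rintro ⟨U, hU, hlU⟩
      exact (hc hU).2.2 hlU
  obtain ⟨M, -, hM⟩ := zorn_subset_nonempty 𝒜 hchain S.1 ⟨S.2, subset_rfl, hl⟩
  obtain ⟨hMind, hSM, hlM⟩ := hM.prop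
  refine ⟨⟨M, hMind⟩, hSM, hlM, fun Q hQ => ?_⟩
  by_contra hlQ
  exact hQ.ne (hM.eq_of_le ⟨Q.2, hSM.trans hQ.le, hlQ⟩ hQ.le)

lemma exists_XL_separating (S : IndObj L) {l : L} (hl : l ∉ S.1) :
    ∃ P : XL L, S.1 ⊆ P.1.1 ∧ l ∉ P.1.1 := by
  obtain ⟨P, hSP, hlP, hmax⟩ := exists_indObj_maximal_not_mem S hl
  have hX : P.1 ⊂ indInterAbove P :=
    Set.ssubset_iff_subset_ne.2 ⟨subset_indInterAbove P,
      fun h => hlP (h ▸ mem_indInterAbove_iff.2 hmax)⟩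
  exact ⟨⟨P, hX⟩, hSP, hlP⟩

lemma eq_setOf_ptSupp_subset_indSupp (S : IndObj L) :
    S.1 = {l : L | ptSupp l ⊆ indSupp S} := by
  ext l
  refine ⟨fun hl P hP hSP => hP (hSP hl), fun hl => ?_⟩
  by_contra hlS
  obtain ⟨P, hSP, hlP⟩ := exists_XL_separating S hlS
  exact hl hlP hSP

end

/-- The map `Ind(L) → 2^{X_L}`, `S ↦ Supp(S) = {P ∈ X_L | S ⊄ P}`, is injective, and
`Z ↦ {l | Supp(l) ⊆ Z}` is a left inverse: `S = {l | Supp(l) ⊆ Supp(S)}` for every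
`S ∈ Ind(L)`. -/
theorem stmt_3 (L : Type*) [SemilatticeSup L] :
    Function.Injective (fun S : IndObj L => indSupp S) ∧
    ∀ S : IndObj L, S.1 = {l : L | ptSupp l ⊆ indSupp S} := by
  refine ⟨fun S T h => Subtype.ext ?_, eq_setOf_ptSupp_subset_indSupp⟩
  rw [eq_setOf_ptSupp_subset_indSupp S, eq_setOf_ptSupp_subset_indSupp T]
  exact congrArg (fun Z => {l : L | ptSupp l ⊆ Z}) h
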